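/- arXiv:1709.08775 — 3 statements merged into one kernel-verified Lean document; each statement's English description precedes it below -/
import Mathlib

section
/- Let f(α,p) = α(1−2p)(α−4p)/(4p(1−p)) + 1 for p ∈ (0,1/2) and α ∈ [0,1]. Then f attains its unique global minimum at p = 1 − √2/2 and α = 2 − √2. -/
/-!
Clearing the positive denominator `4p(1−p)`, the gap `f(α,p) − (2√2 − 2)` becomes the sum of
squares `(1−2p)(α−2p)² + 8p(p − (1 − √2/2))²`, whose weights are positive for `p ∈ (0,1/2)`.
Hence `2√2 − 2 = f(2 − √2, 1 − √2/2)` is the minimum, attained only where `α = 2p` and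
`p = 1 − √2/2`.
-/

/-- Variance factor of the general trimean estimator for exponential samples. -/
noncomputable def trimeanVarFactor (α p : ℝ) : ℝ :=
  α * (1 - 2 * p) * (α - 4 * p) / (4 * p * (1 - p)) + 1

open Real

theorem trimeanVarFactor_two_sub_sqrt_two :
    trimeanVarFactor (2 - √2) (1 - √2 / 2) = 2 * √2 - 2 := by
  have hs2 : √2 ^ 2 = 2 := sq_sqrt zero_le_two
  have hden : 4 * (1 - √2 / 2) * (1 - (1 - √2 / 2)) = 2 * √2 - 2 := by
    linear_combination (-1 : ℝ) * hs2
  have hden_ne : 2 * √2 - 2 ≠ 0 := by nlinarith [one_lt_sqrt_two]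
  rw [trimeanVarFactor, hden, div_add_one hden_ne, div_eq_iff hden_ne]
  linear_combination (1 - √2) * hs2

theorem trimeanVarFactor_sub_eq (α p : ℝ) (hden : 4 * p * (1 - p) ≠ 0) :
    trimeanVarFactor α p - (2 * √2 - 2) =
      ((1 - 2 * p) * (α - 2 * p) ^ 2 + 8 * p * (p - (1 - √2 / 2)) ^ 2) / (4 * p * (1 - p)) := by
  rw [eq_div_iff hden, trimeanVarFactor, sub_mul, add_mul, div_mul_cancel₀ _ hden]
  linear_combination (-2 * p) * sq_sqrt (zero_le_two : (0 : ℝ) ≤ 2)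

theorem trimeanVarFactor_global_min_general (α p : ℝ)
    (hp0 : 0 < p) (hp : p < 1 / 2) :
    trimeanVarFactor (2 - Real.sqrt 2) (1 - Real.sqrt 2 / 2) ≤ trimeanVarFactor α p ∧
    (trimeanVarFactor α p = trimeanVarFactor (2 - Real.sqrt 2) (1 - Real.sqrt 2 / 2) →
      α = 2 - Real.sqrt 2 ∧ p = 1 - Real.sqrt 2 / 2) := by
  have hden : 0 < 4 * p * (1 - p) := by nlinarith
  have hA : 0 ≤ (1 - 2 * p) * (α - 2 * p) ^ 2 := mul_nonneg (by linarith) (sq_nonneg _)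
  have hB : 0 ≤ 8 * p * (p - (1 - √2 / 2)) ^ 2 := by positivity
  have hgap := trimeanVarFactor_sub_eq α p hden.ne'
  rw [trimeanVarFactor_two_sub_sqrt_two]
  refine ⟨sub_nonneg.mp (hgap ▸ div_nonneg (add_nonneg hA hB) hden.le), fun heq => ?_⟩
  rw [← sub_eq_zero, hgap, div_eq_zero_iff, or_iff_left hden.ne',
    add_eq_zero_iff_of_nonneg hA hB] at heq
  obtain ⟨hA0, hB0⟩ := heq
  have hp_eq : p = 1 - √2 / 2 := by
    simpa [hp0.ne', sub_eq_zero] using hB0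
  have hα : α = 2 * p := by
    simpa [show 1 - 2 * p ≠ 0 by linarith, sub_eq_zero] using hA0
  exact ⟨by rw [hα, hp_eq]; ring, hp_eq⟩

/-- `f(α,p) = α(1−2p)(α−4p)/(4p(1−p)) + 1` on `α ∈ [0,1]`, `p ∈ (0,1/2)` attains its
unique global minimum at `p = 1 − √2/2`, `α = 2 − √2`. -/
theorem trimeanVarFactor_global_min (α p : ℝ)
    (hα0 : 0 ≤ α) (hα1 : α ≤ 1) (hp0 : 0 < p) (hp : p < 1 / 2) :
    trimeanVarFactor (2 - Real.sqrt 2) (1 - Real.sqrt 2 / 2) ≤ trimeanVarFactor α p ∧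
    (trimeanVarFactor α p = trimeanVarFactor (2 - Real.sqrt 2) (1 - Real.sqrt 2 / 2) →
      α = 2 - Real.sqrt 2 ∧ p = 1 - Real.sqrt 2 / 2) :=
  trimeanVarFactor_global_min_general α p hp0 hp
end

section
/- The Hessian matrix of f(α,p) = α(1−2p)(α−4p)/(4p(1−p)) + 1 evaluated at α = 2−√2, p = 1−√2/2 is positive definite. -/
/-!
At `α = 2 − √2`, `p = 1 − √2/2` we have `α = 2p` and `2p² − 4p + 1 = 0`. Using these two relations
the Hessian collapses to `!![1, -2; -2, 12 - 8p]`, whose leading entry is `1` and whose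
determinant is `8(1 − p) > 0`, so it is positive definite by Sylvester's criterion.
-/

open Matrix

theorem Matrix.posDef_fin_two {K : Type*} [Field K] [LinearOrder K] [IsStrictOrderedRing K]
    [StarRing K] [TrivialStar K] {a b c : K} (ha : 0 < a) (hdet : b ^ 2 < a * c) :
    (!![a, b; b, c]).PosDef := by
  rw [posDef_iff_dotProduct_mulVec]
  refine ⟨by ext i j; fin_cases i <;> fin_cases j <;> simp [conjTranspose_apply], fun x hx => ?_⟩
  simp only [star_trivial, dotProduct, mulVec, Fin.sum_univ_two, cons_val_zero, cons_val_one,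
    of_apply, cons_val', empty_val', cons_val_fin_one]
  have hsq : a * (x 0 * (a * x 0 + b * x 1) + x 1 * (b * x 0 + c * x 1))
      = (a * x 0 + b * x 1) ^ 2 + (a * c - b ^ 2) * x 1 ^ 2 := by ring
  refine pos_of_mul_pos_right (hsq ▸ ?_) ha.le
  rcases eq_or_ne (x 1) 0 with h1 | h1
  · have h0 : x 0 ≠ 0 := fun h0 => hx (funext fun i => by fin_cases i <;> assumption)
    simpa [h1] using sq_pos_of_ne_zero (mul_ne_zero ha.ne' h0)
  · exact add_pos_of_nonneg_of_pos (sq_nonneg _) (mul_pos (sub_pos.2 hdet) (sq_pos_of_ne_zero h1))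

/-- The Hessian of `f(α,p) = α(1−2p)(α−4p)/(4p(1−p)) + 1`. -/
noncomputable def trimeanVarHessian (α p : ℝ) : Matrix (Fin 2) (Fin 2) ℝ :=
  !![-((2 * p - 1) / (2 * p * (1 - p))),
      (2 * p ^ 2 - 2 * α * p ^ 2 + α * (2 * p - 1)) / (2 * p ^ 2 * (1 - p) ^ 2);
      (2 * p ^ 2 - 2 * α * p ^ 2 + α * (2 * p - 1)) / (2 * p ^ 2 * (1 - p) ^ 2),
      (2 * p ^ 3 * α * (2 - α) + α ^ 2 * p * (1 - p) + α ^ 2 * (2 * p - 1) ^ 2)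
        / (2 * p ^ 3 * (1 - p) ^ 3)]

theorem trimeanVarHessian_two_mul_self {p : ℝ} (hroot : 2 * p ^ 2 - 4 * p + 1 = 0) :
    trimeanVarHessian (2 * p) p = !![1, -2; -2, 12 - 8 * p] := by
  have hp : p ≠ 0 := by rintro rfl; norm_num at hroot
  have hq : 1 - p ≠ 0 := by rw [sub_ne_zero]; rintro rfl; norm_num at hroot
  have hA : -((2 * p - 1) / (2 * p * (1 - p))) = 1 := by
    rw [neg_eq_iff_eq_neg, div_eq_iff (by simp [hp, hq])]
    linear_combination -hroot
  have hB : (2 * p ^ 2 - 2 * (2 * p) * p ^ 2 + 2 * p * (2 * p - 1)) / (2 * p ^ 2 * (1 - p) ^ 2)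
      = -2 := by
    rw [div_eq_iff (by simp [hp, hq])]
    linear_combination (2 * p ^ 2 - 2 * p) * hroot
  have hC : (2 * p ^ 3 * (2 * p) * (2 - 2 * p) + (2 * p) ^ 2 * p * (1 - p)
      + (2 * p) ^ 2 * (2 * p - 1) ^ 2) / (2 * p ^ 3 * (1 - p) ^ 3) = 12 - 8 * p := by
    rw [div_eq_iff (by simp [hp, hq])]
    linear_combination (4 * p ^ 2 - 20 * p ^ 3 + 20 * p ^ 4 - 8 * p ^ 5) * hroot
  rw [trimeanVarHessian, hA, hB, hC]

theorem trimeanVarHessian_posDef {p : ℝ} (hroot : 2 * p ^ 2 - 4 * p + 1 = 0) (hp : p < 1) :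
    (trimeanVarHessian (2 * p) p).PosDef := by
  rw [trimeanVarHessian_two_mul_self hroot]
  exact posDef_fin_two one_pos (by linarith)

/-- The Hessian of `f(α,p) = α(1−2p)(α−4p)/(4p(1−p)) + 1` at `α = 2−√2`, `p = 1−√2/2`
is positive definite. -/
theorem trimeanVarFactor_hessian_posDef :
    let α : ℝ := 2 - Real.sqrt 2
    let p : ℝ := 1 - Real.sqrt 2 / 2
    Matrix.PosDef
      (!![-((2 * p - 1) / (2 * p * (1 - p))),
          (2 * p ^ 2 - 2 * α * p ^ 2 + α * (2 * p - 1)) / (2 * p ^ 2 * (1 - p) ^ 2);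
          (2 * p ^ 2 - 2 * α * p ^ 2 + α * (2 * p - 1)) / (2 * p ^ 2 * (1 - p) ^ 2),
          (2 * p ^ 3 * α * (2 - α) + α ^ 2 * p * (1 - p) + α ^ 2 * (2 * p - 1) ^ 2)
            / (2 * p ^ 3 * (1 - p) ^ 3)]) := by
  intro α p
  have hα : α = 2 * p := by simp only [α, p]; ring
  have hroot : 2 * p ^ 2 - 4 * p + 1 = 0 := by
    simp only [p]
    linear_combination (1 / 2 : ℝ) * Real.sq_sqrt (zero_le_two : (0 : ℝ) ≤ 2)
  have hp : p < 1 := by simp only [p]; linarith [Real.sqrt_pos.2 (zero_lt_two : (0 : ℝ) < 2)]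
  change (trimeanVarHessian α p).PosDef
  rw [hα]
  exact trimeanVarHessian_posDef hroot hp
end

section
/- Let Σ be the 3×3 matrix with entries σ_ij = p_i(1−p_j)/(f(ξ_{p_i})f(ξ_{p_j})) for i ≤ j (symmetric), where (p_1,p_2,p_3) = (p, 1/2, 1−p) and the underlying distribution is exponential with mean λ. Then for A = [α/2, 1−α, α/2], one has A Σ Aᵀ = (α(1−2p)(α−4p)/(4p(1−p)) + 1)·λ². -/
/-!
For the exponential law `f(ξ_q) = λ⁻¹(1 - q)`, so in `σ_ij` the factor `1 - max(p_i, p_j)`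
cancels against the density at the larger quantile: `σ_ij = λ² q/(1 - q)` with
`q = min(p_i, p_j)`. Since the levels `p < 1/2 < 1 - p` are increasing, `Σ` is `λ²` times the
matrix of odds `r(min i j)` with `r = (p/(1-p), 1, (1-p)/p)`, and the quadratic form is a
rational identity in `p` and `α`.
-/

open Finset

theorem min_mul_one_sub_max_div_inv_mul {K : Type*} [Field K] [LinearOrder K] {a b : K}
    (ha : a ≠ 1) (hb : b ≠ 1) (c : K) :
    min a b * (1 - max a b) / (c⁻¹ * (1 - a) * (c⁻¹ * (1 - b)))
      = c ^ 2 * (min a b / (1 - min a b)) := by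
  have ha' : 1 - a ≠ 0 := sub_ne_zero.mpr ha.symm
  have hb' : 1 - b ≠ 0 := sub_ne_zero.mpr hb.symm
  rcases eq_or_ne c 0 with rfl | hc
  · simp
  rcases le_total a b with h | h
  · rw [min_eq_left h, max_eq_right h]
    field_simp
  · rw [min_eq_right h, max_eq_left h]
    field_simp

theorem general_trimean_variance_factor_general (lam α p : ℝ) (hp0 : 0 < p) (hp : p < 1 / 2) :
    let ps : Fin 3 → ℝ := ![p, 1 / 2, 1 - p]
    let fq : Fin 3 → ℝ := fun i => lam⁻¹ * (1 - ps i)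
    let S : Matrix (Fin 3) (Fin 3) ℝ := fun i j =>
      min (ps i) (ps j) * (1 - max (ps i) (ps j)) / (fq i * fq j)
    let A : Fin 3 → ℝ := ![α / 2, 1 - α, α / 2]
    ∑ i : Fin 3, ∑ j : Fin 3, A i * S i j * A j
      = (α * (1 - 2 * p) * (α - 4 * p) / (4 * p * (1 - p)) + 1) * lam ^ 2 := by
  intro ps fq S A
  have hps_mono : StrictMono ps := by
    refine Fin.strictMono_iff_lt_succ.mpr fun i => ?_
    fin_cases i <;> simp [ps] <;> linarith
  have hps_ne_one : ∀ i, ps i ≠ 1 := by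
    intro i
    fin_cases i <;> simp [ps] <;> linarith
  have hS : ∀ i j, S i j = lam ^ 2 * (ps (min i j) / (1 - ps (min i j))) := fun i j => by
    rw [hps_mono.monotone.map_min]
    exact min_mul_one_sub_max_div_inv_mul (hps_ne_one i) (hps_ne_one j) lam
  have hp_ne : p ≠ 0 := hp0.ne'
  have hp_ne_one : 1 - p ≠ 0 := by linarith
  simp only [hS, Fin.sum_univ_three, Fin.isValue, Matrix.cons_val_zero, Matrix.cons_val_one,
    Matrix.cons_val, min_self, zero_le, inf_of_le_left, inf_of_le_right, Fin.reduceLE,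
    one_div, sub_sub_cancel, A, ps]
  field_simp
  ring

/-- For the asymptotic covariance matrix `Σ` of the sample quantiles at
`(p, 1/2, 1−p)` of an Exponential(λ) sample, with entries
`σ_ij = p_i(1−p_j)/(f(ξ_{p_i})f(ξ_{p_j}))` for `i ≤ j` (symmetric), where
`f(ξ_q) = λ⁻¹(1−q)`, and weights `A = [α/2, 1−α, α/2]`, one has
`A Σ Aᵀ = (α(1−2p)(α−4p)/(4p(1−p)) + 1)·λ²`. -/
theorem general_trimean_variance_factor (lam α p : ℝ) (hlam : 0 < lam)
    (hα0 : 0 ≤ α) (hα1 : α ≤ 1) (hp0 : 0 < p) (hp : p < 1 / 2) :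
    let ps : Fin 3 → ℝ := ![p, 1 / 2, 1 - p]
    let fq : Fin 3 → ℝ := fun i => lam⁻¹ * (1 - ps i)
    let S : Matrix (Fin 3) (Fin 3) ℝ := fun i j =>
      min (ps i) (ps j) * (1 - max (ps i) (ps j)) / (fq i * fq j)
    let A : Fin 3 → ℝ := ![α / 2, 1 - α, α / 2]
    ∑ i : Fin 3, ∑ j : Fin 3, A i * S i j * A j
      = (α * (1 - 2 * p) * (α - 4 * p) / (4 * p * (1 - p)) + 1) * lam ^ 2 :=
  general_trimean_variance_factor_general lam α p hp0 hp
end
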